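/- Let λ > 1 and σ > 0. For each w > 0 define F(w) = min over σ̄ ≥ 0 of (1−λ)·log(1 + w·σ̄²) − log(σ² + σ̄²) + λ·w·σ̄². Then F is nondecreasing in w; consequently the minimizing sensor index in the single-sensor attack is the one with the smallest diagonal entry (W)_{ii}. -/

import Mathlib

/-!
For each fixed `s` the cost is nondecreasing in `w`: its `w`-derivative is
`s² (λ - (λ - 1) / (1 + w s²)) ≥ s²`, which is the estimate
`(λ - 1) (log (1 + w₂ s²) - log (1 + w₁ s²)) ≤ (λ - 1) (w₂ - w₁) s²`
in integrated form. The infimum over `s` is finite because `log x ≤ x - 1`, applied to `1 + w s²`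
and to `w (σ² + s²)`, bounds the cost below by `1 + log w - w σ²`; so the infimum inherits the
monotonicity.
-/

open Real Set

lemma csInf_image_le_csInf_image {α β : Type*} [ConditionallyCompleteLattice α]
    {f g : β → α} {S : Set β} (hS : S.Nonempty) (hf : BddBelow (f '' S))
    (h : ∀ s ∈ S, f s ≤ g s) : sInf (f '' S) ≤ sInf (g '' S) :=
  le_csInf (hS.image g) <| by
    rintro _ ⟨s, hs, rfl⟩
    exact csInf_le_of_le hf ⟨s, hs, rfl⟩ (h s hs)

lemma Real.log_sub_log_le_sub {a b : ℝ} (ha : 1 ≤ a) (hab : a ≤ b) :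
    log b - log a ≤ b - a := by
  have ha₀ : 0 < a := by linarith
  calc log b - log a = log (b / a) := (log_div (by linarith) ha₀.ne').symm
    _ ≤ b / a - 1 := log_le_sub_one_of_pos (div_pos (by linarith) ha₀)
    _ = (b - a) / a := by field_simp
    _ ≤ b - a := div_le_self (by linarith) ha

-- `w` plays the diagonal entry `(W)ᵢᵢ` and `s` the attacker's `σ̄`.
noncomputable def attackCost (lam σ w s : ℝ) : ℝ :=
  (1 - lam) * log (1 + w * s ^ 2) - log (σ ^ 2 + s ^ 2) + lam * w * s ^ 2

section attackCost

variable {lam σ : ℝ}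

lemma attackCost_le_attackCost (hlam : 1 ≤ lam) {w₁ w₂ : ℝ} (hw₁ : 0 ≤ w₁) (hw : w₁ ≤ w₂)
    (s : ℝ) : attackCost lam σ w₁ s ≤ attackCost lam σ w₂ s := by
  have hs : 0 ≤ s ^ 2 := sq_nonneg s
  have hlog : log (1 + w₂ * s ^ 2) - log (1 + w₁ * s ^ 2) ≤ (w₂ - w₁) * s ^ 2 := by
    have := log_sub_log_le_sub (a := 1 + w₁ * s ^ 2) (b := 1 + w₂ * s ^ 2)
      (by nlinarith) (by nlinarith)
    linarith
  unfold attackCost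
  nlinarith [mul_nonneg (sub_nonneg.mpr hw) hs]

lemma le_attackCost (hlam : 1 ≤ lam) (hσ : σ ≠ 0) {w : ℝ} (hw : 0 < w) (s : ℝ) :
    1 + log w - w * σ ^ 2 ≤ attackCost lam σ w s := by
  have hs : 0 ≤ s ^ 2 := sq_nonneg s
  have hσs : 0 < σ ^ 2 + s ^ 2 := by positivity
  have h₁ : log (1 + w * s ^ 2) ≤ w * s ^ 2 := by
    have := log_le_sub_one_of_pos (x := 1 + w * s ^ 2) (by positivity)
    linarith
  have h₂ : log w + log (σ ^ 2 + s ^ 2) ≤ w * (σ ^ 2 + s ^ 2) - 1 := by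
    rw [← log_mul hw.ne' hσs.ne']
    exact log_le_sub_one_of_pos (by positivity)
  have h₃ : (1 - lam) * (w * s ^ 2) ≤ (1 - lam) * log (1 + w * s ^ 2) :=
    mul_le_mul_of_nonpos_left h₁ (by linarith)
  unfold attackCost
  linarith

lemma bddBelow_attackCost_image (hlam : 1 ≤ lam) (hσ : σ ≠ 0) {w : ℝ} (hw : 0 < w)
    (S : Set ℝ) : BddBelow (attackCost lam σ w '' S) :=
  ⟨1 + log w - w * σ ^ 2, by
    rintro _ ⟨s, -, rfl⟩
    exact le_attackCost hlam hσ hw s⟩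

end attackCost

/-- For `λ > 1` and `σ > 0`, the optimized single-sensor cost
`F(w) = min_{σ̄ ≥ 0} [(1−λ)·log(1 + w·σ̄²) − log(σ² + σ̄²) + λ·w·σ̄²]`
is nondecreasing in `w` on `(0, ∞)`. -/
theorem stmt_7 (lam σ : ℝ) (hlam : 1 < lam) (hσ : 0 < σ) :
    MonotoneOn (fun w : ℝ =>
      sInf ((fun s : ℝ =>
        (1 - lam) * Real.log (1 + w * s ^ 2) - Real.log (σ ^ 2 + s ^ 2)
          + lam * w * s ^ 2) '' Set.Ici 0)) (Set.Ioi 0) := by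
  intro w₁ hw₁ w₂ _ hw
  exact csInf_image_le_csInf_image nonempty_Ici
    (bddBelow_attackCost_image hlam.le hσ.ne' hw₁ _)
    fun s _ => attackCost_le_attackCost hlam.le (le_of_lt hw₁) hw s
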